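/- Let A₂, B₃, B₄, C₂, H₂, β₁,…,β₅ ∈ ℝ with B₃ − B₄ + √(B₃² + B₄²) ≠ 0, set S = √(B₃² + B₄²) and b₁ = (S/2)·(1 + i·(B₃ + B₄ − S)/(B₃ − B₄ + S)), and let g₁, g₂, g₃, g₄ : ℂ → ℂ be twice differentiable. Define u : ℂ⁴ → ℂ (variables (p,q,z,w)) by u = β₁ + g₁(A₂(1+i)p + A₂(1−i)q + 2iA₂z − 2iA₂w + β₂) + g₂(b₁p + conj(b₁)q + (B₃+iB₄)z + (B₃−iB₄)w + β₃) + g₃(iC₂p − iC₂q + β₄) + g₄(H₂(−1+i)p + H₂(−1−i)q + 2iH₂z − 2iH₂w + β₅). Then u satisfies u_{pq}u_{zw} − u_{pw}u_{qz} − (u_{pq})² + u_{pp}u_{qq} = 0 at every point (class III of solutions of the Legendre-transformed hyperbolic complex Monge–Ampère equation). -/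

import Mathlib

/-!
Each summand of `u` is a plane wave `g (ℓ ⬝ (p, q, z, w) + β)`, whose Hessian is the rank-one
matrix `g'' ℓ ℓᵀ`. The equation is `Q (Hess u) = 0` for a quadratic form `Q` that vanishes on
rank-one matrices, so on `Hess u = ∑ₖ gₖ'' ℓₖ ℓₖᵀ` it equals `½ ∑ₖₗ gₖ'' gₗ'' P(ℓₖ, ℓₗ)` with `P`
the polarization of `Q`. It therefore suffices that the four directions be pairwise
`P`-orthogonal; this is a finite computation, and `b₁` is exactly the coefficient that makes the
second direction orthogonal to the other three.
-/

/-- Partial derivative with respect to the first argument. -/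
noncomputable def pd1 (f : ℂ → ℂ → ℂ → ℂ → ℂ) (a b c d : ℂ) : ℂ :=
  deriv (fun s => f s b c d) a

/-- Partial derivative with respect to the second argument. -/
noncomputable def pd2 (f : ℂ → ℂ → ℂ → ℂ → ℂ) (a b c d : ℂ) : ℂ :=
  deriv (fun s => f a s c d) b

/-- Partial derivative with respect to the third argument. -/
noncomputable def pd3 (f : ℂ → ℂ → ℂ → ℂ → ℂ) (a b c d : ℂ) : ℂ :=
  deriv (fun s => f a b s d) c

/-- Partial derivative with respect to the fourth argument. -/
noncomputable def pd4 (f : ℂ → ℂ → ℂ → ℂ → ℂ) (a b c d : ℂ) : ℂ :=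
  deriv (fun s => f a b c s) d

noncomputable def hessian (u : ℂ → ℂ → ℂ → ℂ → ℂ) (p q z w : ℂ) : Fin 4 → Fin 4 → ℂ :=
  fun i j => ![pd1, pd2, pd3, pd4] i (![pd1, pd2, pd3, pd4] j u) p q z w

def planeWaveSum {n : ℕ} (β : ℂ) (g : Fin n → ℂ → ℂ) (ℓ : Fin n → Fin 4 → ℂ) (e : Fin n → ℂ) :
    ℂ → ℂ → ℂ → ℂ → ℂ :=
  fun p q z w => β + ∑ k, g k (ℓ k 0 * p + ℓ k 1 * q + ℓ k 2 * z + ℓ k 3 * w + e k)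

section PlaneWaves

variable {n : ℕ} {β : ℂ} {g : Fin n → ℂ → ℂ} {ℓ : Fin n → Fin 4 → ℂ} {e : Fin n → ℂ}

theorem deriv_const_add_sum_comp_affine (β : ℂ) (hg : ∀ k, Differentiable ℂ (g k))
    {φ : Fin n → ℂ → ℂ} (c : Fin n → ℂ) (hφ : ∀ k s, φ k s = c k * s + φ k 0) (x : ℂ) :
    deriv (fun s => β + ∑ k, g k (φ k s)) x = ∑ k, c k * deriv (g k) (φ k x) := by
  have hφ' (k : Fin n) : HasDerivAt (φ k) (c k) x := by
    rw [funext (hφ k)]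
    simpa using ((hasDerivAt_id x).const_mul (c k)).add_const (φ k 0)
  refine (HasDerivAt.const_add β (HasDerivAt.fun_sum fun k _ => ?_)).deriv
  rw [mul_comm]
  exact (hg k (φ k x)).hasDerivAt.comp x (hφ' k)

theorem pd1_planeWaveSum (hg : ∀ k, Differentiable ℂ (g k)) :
    pd1 (planeWaveSum β g ℓ e) = planeWaveSum 0 (fun k s => ℓ k 0 * deriv (g k) s) ℓ e := by
  funext p q z w
  simp only [pd1, planeWaveSum, zero_add]
  exact deriv_const_add_sum_comp_affine β hg _ (fun k s => by ring) _

theorem pd2_planeWaveSum (hg : ∀ k, Differentiable ℂ (g k)) :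
    pd2 (planeWaveSum β g ℓ e) = planeWaveSum 0 (fun k s => ℓ k 1 * deriv (g k) s) ℓ e := by
  funext p q z w
  simp only [pd2, planeWaveSum, zero_add]
  exact deriv_const_add_sum_comp_affine β hg _ (fun k s => by ring) _

theorem pd3_planeWaveSum (hg : ∀ k, Differentiable ℂ (g k)) :
    pd3 (planeWaveSum β g ℓ e) = planeWaveSum 0 (fun k s => ℓ k 2 * deriv (g k) s) ℓ e := by
  funext p q z w
  simp only [pd3, planeWaveSum, zero_add]
  exact deriv_const_add_sum_comp_affine β hg _ (fun k s => by ring) _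

theorem pd4_planeWaveSum (hg : ∀ k, Differentiable ℂ (g k)) :
    pd4 (planeWaveSum β g ℓ e) = planeWaveSum 0 (fun k s => ℓ k 3 * deriv (g k) s) ℓ e := by
  funext p q z w
  simp only [pd4, planeWaveSum, zero_add]
  exact deriv_const_add_sum_comp_affine β hg _ (fun k s => by ring) _

theorem hessian_planeWaveSum (hg : ∀ k, ContDiff ℂ 2 (g k)) (p q z w : ℂ) :
    hessian (planeWaveSum β g ℓ e) p q z w = fun i j => ∑ k, ℓ k i * (ℓ k j *
      deriv (deriv (g k)) (ℓ k 0 * p + ℓ k 1 * q + ℓ k 2 * z + ℓ k 3 * w + e k)) := by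
  have hg₁ (k : Fin n) : Differentiable ℂ (g k) := (hg k).differentiable two_ne_zero
  have hg₂ (i : Fin 4) (k : Fin n) : Differentiable ℂ fun s => ℓ k i * deriv (g k) s :=
    ((hg k).differentiable_deriv_two).const_mul _
  funext i j
  fin_cases i <;> fin_cases j <;>
    simp [hessian, pd1_planeWaveSum, pd2_planeWaveSum, pd3_planeWaveSum, pd4_planeWaveSum, hg₁, hg₂,
      planeWaveSum, deriv_const_mul_field']

end PlaneWaves

def mongeAmpereForm (H : Fin 4 → Fin 4 → ℂ) : ℂ :=
  H 0 1 * H 2 3 - H 0 3 * H 1 2 - H 0 1 ^ 2 + H 0 0 * H 1 1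

/-- The polarization `Q (ℓ ℓᵀ + m mᵀ) - Q (ℓ ℓᵀ) - Q (m mᵀ)` of `Q = mongeAmpereForm`. -/
def mongeAmperePolar (ℓ m : Fin 4 → ℂ) : ℂ :=
  ℓ 0 * ℓ 1 * (m 2 * m 3) + m 0 * m 1 * (ℓ 2 * ℓ 3) - ℓ 0 * ℓ 3 * (m 1 * m 2)
    - m 0 * m 3 * (ℓ 1 * ℓ 2) + (ℓ 0 * m 1 - ℓ 1 * m 0) ^ 2

theorem mongeAmperePolar_self (ℓ : Fin 4 → ℂ) : mongeAmperePolar ℓ ℓ = 0 := by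
  unfold mongeAmperePolar; ring

theorem mongeAmperePolar_comm (ℓ m : Fin 4 → ℂ) : mongeAmperePolar ℓ m = mongeAmperePolar m ℓ := by
  unfold mongeAmperePolar; ring

theorem mongeAmperePolar_smul_left (a : ℂ) (ℓ m : Fin 4 → ℂ) :
    mongeAmperePolar (a • ℓ) m = a ^ 2 * mongeAmperePolar ℓ m := by
  simp only [mongeAmperePolar, Pi.smul_apply, smul_eq_mul]; ring

theorem mongeAmperePolar_smul_right (a : ℂ) (ℓ m : Fin 4 → ℂ) :
    mongeAmperePolar ℓ (a • m) = a ^ 2 * mongeAmperePolar ℓ m := by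
  simp only [mongeAmperePolar, Pi.smul_apply, smul_eq_mul]; ring

theorem two_mul_mongeAmpereForm_sum {n : ℕ} (h : Fin n → ℂ) (ℓ : Fin n → Fin 4 → ℂ) :
    2 * mongeAmpereForm (fun i j => ∑ k, ℓ k i * (ℓ k j * h k))
      = ∑ k, ∑ l, h k * h l * mongeAmperePolar (ℓ k) (ℓ l) := by
  set F : Fin n → Fin n → ℂ := fun k l => h k * h l *
    (ℓ k 0 * ℓ k 1 * (ℓ l 2 * ℓ l 3) - ℓ k 0 * ℓ k 3 * (ℓ l 1 * ℓ l 2)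
      - ℓ k 0 * ℓ k 1 * (ℓ l 0 * ℓ l 1) + ℓ k 0 ^ 2 * ℓ l 1 ^ 2) with hF
  have hform : mongeAmpereForm (fun i j => ∑ k, ℓ k i * (ℓ k j * h k)) = ∑ k, ∑ l, F k l := by
    simp only [mongeAmpereForm, hF, sq, Finset.sum_mul_sum, ← Finset.sum_sub_distrib,
      ← Finset.sum_add_distrib]
    refine Finset.sum_congr rfl fun k _ => Finset.sum_congr rfl fun l _ => ?_
    ring
  have hpolar : ∀ k l, h k * h l * mongeAmperePolar (ℓ k) (ℓ l) = F k l + F l k := by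
    intro k l; simp only [hF, mongeAmperePolar]; ring
  simp only [hform, hpolar, Finset.sum_add_distrib]
  rw [Finset.sum_comm (f := fun k l => F l k)]
  ring

theorem mongeAmpereForm_sum_eq_zero {n : ℕ} (h : Fin n → ℂ) {ℓ : Fin n → Fin 4 → ℂ}
    (hℓ : Pairwise fun k l => mongeAmperePolar (ℓ k) (ℓ l) = 0) :
    mongeAmpereForm (fun i j => ∑ k, ℓ k i * (ℓ k j * h k)) = 0 := by
  have hzero : ∀ k l, mongeAmperePolar (ℓ k) (ℓ l) = 0 := by
    intro k l
    rcases eq_or_ne k l with rfl | hkl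
    · exact mongeAmperePolar_self _
    · exact hℓ hkl
  have := two_mul_mongeAmpereForm_sum h ℓ
  simp only [hzero, mul_zero, Finset.sum_const_zero] at this
  exact (mul_eq_zero.mp this).resolve_left two_ne_zero

theorem pairwise_mongeAmperePolar_fin_four {ℓ₀ ℓ₁ ℓ₂ ℓ₃ : Fin 4 → ℂ}
    (h₀₁ : mongeAmperePolar ℓ₀ ℓ₁ = 0) (h₀₂ : mongeAmperePolar ℓ₀ ℓ₂ = 0)
    (h₀₃ : mongeAmperePolar ℓ₀ ℓ₃ = 0) (h₁₂ : mongeAmperePolar ℓ₁ ℓ₂ = 0)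
    (h₁₃ : mongeAmperePolar ℓ₁ ℓ₃ = 0) (h₂₃ : mongeAmperePolar ℓ₂ ℓ₃ = 0) :
    Pairwise fun k l => mongeAmperePolar (![ℓ₀, ℓ₁, ℓ₂, ℓ₃] k) (![ℓ₀, ℓ₁, ℓ₂, ℓ₃] l) = 0 := by
  intro k l hkl
  rcases hkl.lt_or_gt with h | h <;> fin_cases k <;> fin_cases l <;> simp at h <;>
    first | assumption | (rw [mongeAmperePolar_comm]; assumption)

theorem mongeAmpereForm_hessian_planeWaveSum {n : ℕ} (β : ℂ) {g : Fin n → ℂ → ℂ}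
    {ℓ : Fin n → Fin 4 → ℂ} (e : Fin n → ℂ) (hg : ∀ k, ContDiff ℂ 2 (g k))
    (hℓ : Pairwise fun k l => mongeAmperePolar (ℓ k) (ℓ l) = 0) (p q z w : ℂ) :
    mongeAmpereForm (hessian (planeWaveSum β g ℓ e) p q z w) = 0 := by
  rw [hessian_planeWaveSum hg]
  exact mongeAmpereForm_sum_eq_zero _ hℓ

section Directions

open Complex ComplexConjugate

/- Directions of the four plane waves of `u`, named after the constants `A₂`, `B₃, B₄`, `C₂`, `H₂`
that scale or determine them. -/

def dirA : Fin 4 → ℂ := ![1 + I, 1 - I, 2 * I, -2 * I]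

def dirB (b : ℂ) (B₃ B₄ : ℝ) : Fin 4 → ℂ := ![b, conj b, B₃ + I * B₄, B₃ - I * B₄]

def dirC : Fin 4 → ℂ := ![I, -I, 0, 0]

def dirH : Fin 4 → ℂ := ![-1 + I, -1 - I, 2 * I, -2 * I]

theorem mongeAmperePolar_dirA_dirC : mongeAmperePolar dirA dirC = 0 := by
  apply Complex.ext <;> simp [mongeAmperePolar, dirA, dirC, sq]
  norm_num

theorem mongeAmperePolar_dirA_dirH : mongeAmperePolar dirA dirH = 0 := by
  apply Complex.ext <;> simp [mongeAmperePolar, dirA, dirH, sq]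
  norm_num

theorem mongeAmperePolar_dirC_dirH : mongeAmperePolar dirC dirH = 0 := by
  apply Complex.ext <;> simp [mongeAmperePolar, dirC, dirH, sq]
  norm_num

theorem mongeAmperePolar_dirA_dirB {b : ℂ} {B₃ B₄ S : ℝ} (hre : 2 * b.re = S)
    (him : 2 * b.im * (B₃ - B₄ + S) = S * (B₃ + B₄ - S)) (hS : S ^ 2 = B₃ ^ 2 + B₄ ^ 2) :
    mongeAmperePolar dirA (dirB b B₃ B₄) = 0 := by
  apply Complex.ext <;> simp [mongeAmperePolar, dirA, dirB, sq]
  · linear_combination (4 * b.im - 2 * (B₃ + B₄)) * hre + 2 * him - 2 * hS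
  · ring

theorem mongeAmperePolar_dirB_dirC {b : ℂ} {B₃ B₄ : ℝ} (hre : (2 * b.re) ^ 2 = B₃ ^ 2 + B₄ ^ 2) :
    mongeAmperePolar (dirB b B₃ B₄) dirC = 0 := by
  apply Complex.ext <;> simp [mongeAmperePolar, dirB, dirC, sq]
  · linear_combination -hre
  · ring

theorem mongeAmperePolar_dirB_dirH {b : ℂ} {B₃ B₄ S : ℝ} (hre : 2 * b.re = S)
    (him : 2 * b.im * (S + B₃ + B₄) = S * (S - B₃ + B₄)) (hS : S ^ 2 = B₃ ^ 2 + B₄ ^ 2) :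
    mongeAmperePolar (dirB b B₃ B₄) dirH = 0 := by
  apply Complex.ext <;> simp [mongeAmperePolar, dirB, dirH, sq]
  · linear_combination (-4 * b.im - 2 * (B₃ - B₄)) * hre - 2 * him - 2 * hS
  · ring

theorem re_im_relations_of_eq {B₃ B₄ S : ℝ} (hS : S ^ 2 = B₃ ^ 2 + B₄ ^ 2)
    (hD : B₃ - B₄ + S ≠ 0) {b : ℂ}
    (hb : b = ((S : ℂ) / 2) * (1 + I * (((B₃ : ℂ) + B₄ - S) / ((B₃ : ℂ) - B₄ + S)))) :
    2 * b.re = S ∧ 2 * b.im * (B₃ - B₄ + S) = S * (B₃ + B₄ - S)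
      ∧ 2 * b.im * (S + B₃ + B₄) = S * (S - B₃ + B₄) := by
  have hb' : b = ⟨S / 2, S / 2 * ((B₃ + B₄ - S) / (B₃ - B₄ + S))⟩ := by
    rw [hb, Complex.mk_eq_add_mul_I]; push_cast; ring
  have hre : 2 * b.re = S := by rw [hb']; dsimp only; ring
  have him : 2 * b.im * (B₃ - B₄ + S) = S * (B₃ + B₄ - S) := by
    rw [hb']; dsimp only; field_simp
  refine ⟨hre, him, mul_left_cancel₀ hD ?_⟩
  linear_combination (S + B₃ + B₄) * him - 2 * S * hS

end Directions

/-- class III of solutions of the Legendre-transformed hyperbolic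
complex Monge–Ampère equation. -/
theorem stmt5 (A₂ B₃ B₄ C₂ H₂ β₁ β₂ β₃ β₄ β₅ : ℝ)
    (S : ℝ) (hS : S = Real.sqrt (B₃ ^ 2 + B₄ ^ 2))
    (hB : B₃ - B₄ + S ≠ 0)
    (b₁ : ℂ)
    (hb₁ : b₁ = ((S : ℂ) / 2) * (1 + Complex.I * (((B₃ : ℂ) + B₄ - S) / ((B₃ : ℂ) - B₄ + S))))
    (g₁ g₂ g₃ g₄ : ℂ → ℂ)
    (hg₁ : ContDiff ℂ 2 g₁) (hg₂ : ContDiff ℂ 2 g₂)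
    (hg₃ : ContDiff ℂ 2 g₃) (hg₄ : ContDiff ℂ 2 g₄)
    (u : ℂ → ℂ → ℂ → ℂ → ℂ)
    (hu : u = fun p q z w =>
      (β₁ : ℂ)
        + g₁ ((A₂ : ℂ) * (1 + Complex.I) * p + (A₂ : ℂ) * (1 - Complex.I) * q
            + 2 * Complex.I * (A₂ : ℂ) * z - 2 * Complex.I * (A₂ : ℂ) * w + (β₂ : ℂ))
        + g₂ (b₁ * p + (starRingEnd ℂ) b₁ * q + ((B₃ : ℂ) + Complex.I * B₄) * z
            + ((B₃ : ℂ) - Complex.I * B₄) * w + (β₃ : ℂ))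
        + g₃ (Complex.I * (C₂ : ℂ) * p - Complex.I * (C₂ : ℂ) * q + (β₄ : ℂ))
        + g₄ ((H₂ : ℂ) * (-1 + Complex.I) * p + (H₂ : ℂ) * (-1 - Complex.I) * q
            + 2 * Complex.I * (H₂ : ℂ) * z - 2 * Complex.I * (H₂ : ℂ) * w + (β₅ : ℂ))) :
    ∀ p q z w : ℂ,
      pd1 (pd2 u) p q z w * pd3 (pd4 u) p q z w
        - pd1 (pd4 u) p q z w * pd2 (pd3 u) p q z w
        - (pd1 (pd2 u) p q z w) ^ 2
        + pd1 (pd1 u) p q z w * pd2 (pd2 u) p q z w = 0 := by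
  intro p q z w
  have hS₂ : S ^ 2 = B₃ ^ 2 + B₄ ^ 2 := by rw [hS, Real.sq_sqrt (by positivity)]
  obtain ⟨hre, him, him'⟩ := re_im_relations_of_eq hS₂ hB hb₁
  have hu' : u = planeWaveSum β₁ ![g₁, g₂, g₃, g₄]
      ![(A₂ : ℂ) • dirA, dirB b₁ B₃ B₄, (C₂ : ℂ) • dirC, (H₂ : ℂ) • dirH] ![β₂, β₃, β₄, β₅] := by
    subst hu
    funext p q z w
    simp [planeWaveSum, Fin.sum_univ_four, dirA, dirB, dirC, dirH]
    ring_nf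
  rw [hu']
  refine mongeAmpereForm_hessian_planeWaveSum _ _ (fun k => by fin_cases k <;> assumption)
    (pairwise_mongeAmperePolar_fin_four ?_ ?_ ?_ ?_ ?_ ?_) p q z w <;>
    simp only [mongeAmperePolar_smul_left, mongeAmperePolar_smul_right]
  · rw [mongeAmperePolar_dirA_dirB hre him hS₂, mul_zero]
  · rw [mongeAmperePolar_dirA_dirC, mul_zero, mul_zero]
  · rw [mongeAmperePolar_dirA_dirH, mul_zero, mul_zero]
  · rw [mongeAmperePolar_dirB_dirC (by rw [hre, hS₂]), mul_zero]
  · rw [mongeAmperePolar_dirB_dirH hre him' hS₂, mul_zero]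
  · rw [mongeAmperePolar_dirC_dirH, mul_zero, mul_zero]
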